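/- arXiv:2506.15597 — 4 statements merged into one kernel-verified Lean document; each statement's English description precedes it below -/
import Mathlib

section
/- The squared sigmoid loss t ↦ (σ(t) - 1/2)² has (1/8)-Lipschitz derivative on ℝ; that is, for all s, t ∈ ℝ, |g₂'(s) - g₂'(t)| ≤ (1/8)|s - t| where g₂(t) = (σ(t) - 1/2)². -/
/-
With `u = σ(1 - σ)` one has `σ' = u` and `(σ - 1/2)² = 1/4 - u`, so the second derivative of the
loss is `u(6u - 1)`. Since `σ ∈ (0, 1)`, `u ∈ [0, 1/4]`, where `|6u² - u| ≤ 1/8` (the extreme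
value `1/8` is attained at `u = 1/4`). The mean value theorem turns this bound into the Lipschitz
estimate.
-/

noncomputable def sigmoid (t : ℝ) : ℝ := 1 / (1 + Real.exp (-t))

theorem sigmoid_eq_real_sigmoid : sigmoid = Real.sigmoid :=
  funext fun _ => one_div _

section OrderedField

variable {α : Type*} [Field α] [LinearOrder α] [IsStrictOrderedRing α]

lemma mul_one_sub_le_one_div_four (p : α) : p * (1 - p) ≤ 1 / 4 := by
  nlinarith [sq_nonneg (p - 1 / 2)]

lemma abs_six_mul_sq_sub_self_le {u : α} (h0 : 0 ≤ u) (h1 : u ≤ 1 / 4) :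
    |6 * u ^ 2 - u| ≤ 1 / 8 := by
  rw [abs_le]
  constructor <;> nlinarith [sq_nonneg (u - 1 / 12)]

end OrderedField

namespace Real

lemma sigmoid_mul_one_sub_mem_Icc (t : ℝ) :
    sigmoid t * (1 - sigmoid t) ∈ Set.Icc 0 (1 / 4) :=
  ⟨mul_nonneg (sigmoid_nonneg t) (sub_nonneg.2 (sigmoid_le_one t)),
    mul_one_sub_le_one_div_four _⟩

lemma deriv_sigmoid_sub_half_sq :
    deriv (fun t => (sigmoid t - 1 / 2) ^ 2) =
      fun t => 2 * (sigmoid t - 1 / 2) * (sigmoid t * (1 - sigmoid t)) := by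
  funext t
  refine (((hasDerivAt_sigmoid t).sub_const (1 / 2)).fun_pow 2).deriv.trans ?_
  ring

lemma hasDerivAt_deriv_sigmoid_sub_half_sq (t : ℝ) :
    HasDerivAt (deriv fun t => (sigmoid t - 1 / 2) ^ 2)
      (6 * (sigmoid t * (1 - sigmoid t)) ^ 2 - sigmoid t * (1 - sigmoid t)) t := by
  rw [deriv_sigmoid_sub_half_sq]
  have h := hasDerivAt_sigmoid t
  refine (((h.sub_const (1 / 2)).const_mul 2).fun_mul (h.fun_mul (h.const_sub 1))).congr_deriv ?_
  ring

end Real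

/-- The squared sigmoid loss `t ↦ (σ(t) - 1/2)²` has `(1/8)`-Lipschitz derivative on `ℝ`. -/
theorem lipschitz_deriv_sigmoid_loss (s t : ℝ) :
    |deriv (fun t => (sigmoid t - 1 / 2) ^ 2) s -
        deriv (fun t => (sigmoid t - 1 / 2) ^ 2) t| ≤ (1 / 8) * |s - t| := by
  rw [sigmoid_eq_real_sigmoid]
  have bound (x : ℝ) :
      ‖6 * (Real.sigmoid x * (1 - Real.sigmoid x)) ^ 2 - Real.sigmoid x * (1 - Real.sigmoid x)‖
        ≤ 1 / 8 :=
    let ⟨h0, h1⟩ := Real.sigmoid_mul_one_sub_mem_Icc x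
    abs_six_mul_sq_sub_self_le h0 h1
  simpa only [Real.norm_eq_abs] using convex_univ.norm_image_sub_le_of_norm_hasDerivWithin_le
    (fun x _ => (Real.hasDerivAt_deriv_sigmoid_sub_half_sq x).hasDerivWithinAt)
    (fun x _ => bound x) (Set.mem_univ t) (Set.mem_univ s)
end

section
/- Let r(t) = max(0, t) and G = {(t, r(t)) : t ∈ ℝ}. For (u, l) ∈ ℝ² with u < 0 and (1 + √2)u + l ≤ 0, the point (u, 0) ∈ G is a closest point of G to (u, l): for all t ∈ ℝ, l² ≤ (t - u)² + (r(t) - l)². -/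
/-! Only the branch `t ≥ 0` of the graph needs an argument. With `l = -c u` the excess squared
distance there is `2t² + 2(c - 1)tu + u²`, a nonnegative quadratic form exactly when
`(c - 1)² ≤ 2`; at the threshold `c = 1 + √2` it is the perfect square `(√2 t + u)²`. -/

theorem sq_dist_relu_pos_branch_sub_sq (t u l : ℝ) :
    (t - u) ^ 2 + (t - l) ^ 2 - l ^ 2 = (√2 * t + u) ^ 2 - 2 * t * ((1 + √2) * u + l) := by
  linear_combination (-t ^ 2) * Real.sq_sqrt (zero_le_two : (0 : ℝ) ≤ 2)

theorem sq_le_sq_dist_relu_pos_branch {t u l : ℝ} (ht : 0 ≤ t) (h : (1 + √2) * u + l ≤ 0) :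
    l ^ 2 ≤ (t - u) ^ 2 + (t - l) ^ 2 := by
  linarith [sq_dist_relu_pos_branch_sub_sq t u l, sq_nonneg (√2 * t + u),
    mul_nonneg ht (neg_nonneg.mpr h)]

theorem relu_proj_case_neg_general (u l : ℝ)
    (h : (1 + Real.sqrt 2) * u + l ≤ 0) :
    ∀ t : ℝ, l ^ 2 ≤ (t - u) ^ 2 + (max 0 t - l) ^ 2 := by
  intro t
  rcases le_total t 0 with ht | ht
  · rw [max_eq_left ht, zero_sub, neg_sq]
    exact le_add_of_nonneg_left (sq_nonneg _)
  · rw [max_eq_right ht]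
    exact sq_le_sq_dist_relu_pos_branch ht h

/-- Projection onto the graph of ReLU, case `u < 0`, `(1+√2)u + l ≤ 0`: the point `(u, 0)`
of the graph is a closest point to `(u, l)`. -/
theorem relu_proj_case_neg (u l : ℝ) (hu : u < 0)
    (h : (1 + Real.sqrt 2) * u + l ≤ 0) :
    ∀ t : ℝ, l ^ 2 ≤ (t - u) ^ 2 + (max 0 t - l) ^ 2 :=
  relu_proj_case_neg_general u l h
end

section
/- Let r(t) = max(0, t) and G = {(t, r(t)) : t ∈ ℝ}. For (u, l) ∈ ℝ² with u < 0 and (1 + √2)u + l > 0, the point ((u+l)/2, (u+l)/2) ∈ G is a closest point of G to (u, l): for all t ∈ ℝ, (u-l)²/2 ≤ (t - u)² + (r(t) - l)². -/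
/-! The graph of `max 0` is the union of the diagonal ray `{(t, t) : t ≥ 0}` and the horizontal ray
`{(t, 0) : t ≤ 0}`. The squared distance from `(u, l)` to the whole diagonal is `(u - l)² / 2`, and to
the horizontal ray it is at least `l²`; the hypotheses say `u + l ≥ √2 |u|`, which is exactly
`(u - l)² / 2 ≤ l²`. -/

lemma sub_sq_div_two_le_sub_sq_add_sub_sq (t u l : ℝ) :
    (u - l) ^ 2 / 2 ≤ (t - u) ^ 2 + (t - l) ^ 2 := by
  nlinarith [sq_nonneg (2 * t - u - l)]

lemma sub_sq_div_two_le_sq {u l : ℝ} (hu : u < 0) (h : 0 < (1 + Real.sqrt 2) * u + l) :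
    (u - l) ^ 2 / 2 ≤ l ^ 2 := by
  have hsqrt_mul_nonpos : Real.sqrt 2 * u ≤ 0 :=
    mul_nonpos_of_nonneg_of_nonpos (Real.sqrt_nonneg 2) hu.le
  have hsq : 2 * u ^ 2 ≤ (u + l) ^ 2 :=
    calc 2 * u ^ 2 = (Real.sqrt 2 * u) ^ 2 := by
          rw [mul_pow, Real.sq_sqrt zero_le_two]
      _ ≤ (u + l) ^ 2 := sq_le_sq' (by linarith) (by linarith)
  nlinarith

/-- Projection onto the graph of ReLU, case `u < 0`, `(1+√2)u + l > 0`: the point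
`((u+l)/2, (u+l)/2)` of the graph is a closest point to `(u, l)`. -/
theorem relu_proj_case_neg_diag (u l : ℝ) (hu : u < 0)
    (h : 0 < (1 + Real.sqrt 2) * u + l) :
    ∀ t : ℝ, (u - l) ^ 2 / 2 ≤ (t - u) ^ 2 + (max 0 t - l) ^ 2 := by
  intro t
  rcases le_total t 0 with ht | ht
  · rw [max_eq_left ht, zero_sub, neg_sq]
    linarith [sub_sq_div_two_le_sq hu h, sq_nonneg (t - u)]
  · rw [max_eq_right ht]
    exact sub_sq_div_two_le_sub_sq_add_sub_sq t u l
end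

section
/- Let ρ < 0, L > 0, and ‖A‖ > 0 satisfy 8ρ²‖A‖² < 1 and 2|ρ| < 1/(√2 L). Choose ε with 0 < ε < min((1 - 8‖A‖²ρ²)/(4‖A‖²|ρ|), 1/(√2 L) - 2|ρ|), and set γ_y = 2|ρ| + ε, γ_x = 1/(2 γ_y ‖A‖²). Then the step sizes satisfy: 2|ρ| < γ_y ≤ 1/(√2 L), and |ρ| - γ_x + γ_y γ_x² ‖A‖² < 0 (equivalently, γ_x lies strictly between the two roots (1 ∓ √Δ)/(2γ_y‖A‖²) with Δ = 1 - 4|ρ|γ_y‖A‖² > 0). -/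
/-! With `γx = 1/(2 γy ‖A‖²)` the quadratic `x ↦ |ρ| - x + γy ‖A‖² x²` is evaluated at its vertex,
where it equals `|ρ| - 1/(4 γy ‖A‖²)`; so the last condition is `4 |ρ| γy ‖A‖² < 1`, which is exactly
what the first bound on `ε` buys. -/

theorem sub_add_mul_sq_at_vertex {γ c : ℝ} (hγ : γ ≠ 0) (hc : c ≠ 0) (r : ℝ) :
    r - 1 / (2 * γ * c) + γ * (1 / (2 * γ * c)) ^ 2 * c = r - 1 / (4 * γ * c) := by
  field_simp
  ring

theorem sub_add_mul_sq_at_vertex_neg {r γ c : ℝ} (hγ : 0 < γ) (hc : 0 < c)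
    (h : 4 * r * γ * c < 1) :
    r - 1 / (2 * γ * c) + γ * (1 / (2 * γ * c)) ^ 2 * c < 0 := by
  rw [sub_add_mul_sq_at_vertex hγ.ne' hc.ne', sub_neg, lt_div_iff₀ (by positivity)]
  linarith

theorem four_mul_mul_two_mul_add_lt_one {r c ε : ℝ} (hr : 0 < r) (hc : 0 < c)
    (hε : ε < (1 - 8 * c * r ^ 2) / (4 * c * r)) :
    4 * r * (2 * r + ε) * c < 1 := by
  have := (lt_div_iff₀ (by positivity)).mp hε
  linarith

theorem ncspdhg_stepsize_feasibility_general (ρ L nA ε : ℝ)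
    (hρ : ρ < 0) (hA : 0 < nA)
    (hε0 : 0 < ε)
    (hε : ε < min ((1 - 8 * nA ^ 2 * ρ ^ 2) / (4 * nA ^ 2 * |ρ|))
      (1 / (Real.sqrt 2 * L) - 2 * |ρ|)) :
    let γy := 2 * |ρ| + ε
    let γx := 1 / (2 * γy * nA ^ 2)
    2 * |ρ| < γy ∧ γy ≤ 1 / (Real.sqrt 2 * L) ∧
      |ρ| - γx + γy * γx ^ 2 * nA ^ 2 < 0 := by
  intro γy γx
  have hr : 0 < |ρ| := abs_pos.mpr hρ.ne
  obtain ⟨hε₁, hε₂⟩ := lt_min_iff.mp hε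
  rw [← sq_abs ρ] at hε₁
  refine ⟨by linarith, by linarith, ?_⟩
  exact sub_add_mul_sq_at_vertex_neg (by positivity) (by positivity)
    (four_mul_mul_two_mul_add_lt_one hr (by positivity) hε₁)

/-- Feasibility of the NC-SPDHG step-size selection in the case `α = 0`. -/
theorem ncspdhg_stepsize_feasibility (ρ L nA ε : ℝ)
    (hρ : ρ < 0) (hL : 0 < L) (hA : 0 < nA)
    (h1 : 8 * ρ ^ 2 * nA ^ 2 < 1)
    (h2 : 2 * |ρ| < 1 / (Real.sqrt 2 * L))
    (hε0 : 0 < ε)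
    (hε : ε < min ((1 - 8 * nA ^ 2 * ρ ^ 2) / (4 * nA ^ 2 * |ρ|))
      (1 / (Real.sqrt 2 * L) - 2 * |ρ|)) :
    let γy := 2 * |ρ| + ε
    let γx := 1 / (2 * γy * nA ^ 2)
    2 * |ρ| < γy ∧ γy ≤ 1 / (Real.sqrt 2 * L) ∧
      |ρ| - γx + γy * γx ^ 2 * nA ^ 2 < 0 :=
  ncspdhg_stepsize_feasibility_general ρ L nA ε hρ hA hε0 hε
end
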